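/- Every s-t path through the gadget portion of the Knapsack reduction graph (i.e., not using the direct arc (s,t) or the detour node v) corresponds bijectively to a vector x ∈ {0,1}^n, and its cost equals ((c¹)^T x, (c²)^T(𝟏 − x)). -/

import Mathlib

/-- Vertices of the gadget portion of the Knapsack reduction graph: `a i` are the nodes
`v_{i+1}¹` (so `a 0 = s` and `a n = t`) and `b i` are the nodes `v_{i+1}²`. -/
inductive GVertex (n : ℕ) where
  | a : Fin (n + 1) → GVertex n
  | b : Fin n → GVertex n
deriving DecidableEq

/-- Arcs of the gadget graph with their biobjective costs: `(v_i¹, v_i²)` costs `(c¹_i, 0)`,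
`(v_i², v_{i+1}¹)` costs `(0,0)`, and `(v_i¹, v_{i+1}¹)` costs `(0, c²_i)`. -/
def GEdge (n : ℕ) (c1 c2 : Fin n → ℕ) : GVertex n → GVertex n → ℕ × ℕ → Prop :=
  fun u w cost =>
    (∃ i : Fin n, u = .a i.castSucc ∧ w = .b i ∧ cost = (c1 i, 0)) ∨
    (∃ i : Fin n, u = .b i ∧ w = .a i.succ ∧ cost = (0, 0)) ∨
    (∃ i : Fin n, u = .a i.castSucc ∧ w = .a i.succ ∧ cost = (0, c2 i))

/-- `ArcPath E u w l`: `l` is the list of arcs (source, target, cost) of a path from `u`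
to `w` in the graph with arc relation `E`. -/
inductive ArcPath {α : Type*} (E : α → α → ℕ × ℕ → Prop) : α → α → List (α × α × (ℕ × ℕ)) → Prop
  | nil (u : α) : ArcPath E u u []
  | cons {u v w : α} {c : ℕ × ℕ} {l : List (α × α × (ℕ × ℕ))} :
      E u v c → ArcPath E v w l → ArcPath E u w ((u, v, c) :: l)

/-- The total cost of a path given by its list of arcs. -/
def pathCost {α : Type*} (l : List (α × α × (ℕ × ℕ))) : ℕ × ℕ :=
  ((l.map fun e => e.2.2.1).sum, (l.map fun e => e.2.2.2).sum)

/-!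
Reading the gadget from `s` to `t`, at each stage `i` a path either takes the detour
`v_i¹ → v_i² → v_{i+1}¹`, paying `(c¹_i, 0)`, or the direct arc `v_i¹ → v_{i+1}¹`, paying
`(0, c²_i)`, and no arc leads back. So an `s`-`t` path is exactly a concatenation of one segment
per stage, chosen freely and recorded by `x_i`; its cost is the sum of the segment costs. Conversely
`x` is read off the path as the set of detour arcs it contains.
-/

lemma pathCost_eq_sum {α : Type*} (l : List (α × α × (ℕ × ℕ))) :
    pathCost l = (l.map fun e => e.2.2).sum := by
  induction l with
  | nil => rfl
  | cons e l ih => rw [List.map_cons, List.sum_cons, ← ih]; rfl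

section GadgetPaths

variable {n : ℕ} (c1 c2 : Fin n → ℕ)

def gadgetSegment (x : Fin n → Bool) (i : Fin n) : List (GVertex n × GVertex n × (ℕ × ℕ)) :=
  if x i then [(.a i.castSucc, .b i, (c1 i, 0)), (.b i, .a i.succ, (0, 0))]
  else [(.a i.castSucc, .a i.succ, (0, c2 i))]

def gadgetPath (x : Fin n → Bool) (k : Fin (n + 1)) : List (GVertex n × GVertex n × (ℕ × ℕ)) :=
  ((List.finRange n).drop k).flatMap (gadgetSegment c1 c2 x)

def usedArcs (l : List (GVertex n × GVertex n × (ℕ × ℕ))) : Fin n → Bool :=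
  fun i => decide ((.a i.castSucc, .b i, (c1 i, 0)) ∈ l)

variable {c1 c2}

lemma gadgetPath_last (x : Fin n → Bool) : gadgetPath c1 c2 x (Fin.last n) = [] := by
  simp [gadgetPath, List.drop_eq_nil_of_le]

lemma gadgetPath_castSucc (x : Fin n → Bool) (i : Fin n) :
    gadgetPath c1 c2 x i.castSucc = gadgetSegment c1 c2 x i ++ gadgetPath c1 c2 x i.succ := by
  rw [gadgetPath, Fin.val_castSucc, List.drop_eq_getElem_cons (by simp)]
  simp [gadgetPath]

lemma gadgetPath_congr {x y : Fin n → Bool} {k : Fin (n + 1)}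
    (h : ∀ i : Fin n, k ≤ i.castSucc → x i = y i) :
    gadgetPath c1 c2 x k = gadgetPath c1 c2 y k := by
  refine List.flatMap_congr fun i hi => ?_
  have hki : k ≤ i.castSucc := by
    obtain ⟨j, hj, rfl⟩ := List.getElem_of_mem hi
    simp [Fin.le_def]
  rw [gadgetSegment, gadgetSegment, h i hki]

lemma arcPath_gadgetPath (x : Fin n → Bool) (k : Fin (n + 1)) :
    ArcPath (GEdge n c1 c2) (.a k) (.a (Fin.last n)) (gadgetPath c1 c2 x k) := by
  induction k using Fin.reverseInduction with
  | last => rw [gadgetPath_last]; exact .nil _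
  | cast i ih =>
    rw [gadgetPath_castSucc, gadgetSegment]
    split
    · exact .cons (.inl ⟨i, rfl, rfl, rfl⟩) (.cons (.inr (.inl ⟨i, rfl, rfl, rfl⟩)) ih)
    · exact .cons (.inr (.inr ⟨i, rfl, rfl, rfl⟩)) ih

lemma gadgetPath_update_castSucc (x : Fin n → Bool) (i : Fin n) (b : Bool) :
    gadgetPath c1 c2 (Function.update x i b) i.castSucc =
      gadgetSegment c1 c2 (Function.update x i b) i ++ gadgetPath c1 c2 x i.succ := by
  refine (gadgetPath_castSucc _ i).trans (congrArg _ (gadgetPath_congr fun j hj => ?_))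
  refine Function.update_of_ne ?_ _ _
  rintro rfl
  exact absurd hj (not_le.2 Fin.castSucc_lt_succ)

variable (c1 c2) in
/-- The paths from `u` to `t`; an induction along a path passes through the nodes `v_i²` too. -/
def gadgetSuffixes : GVertex n → Set (List (GVertex n × GVertex n × (ℕ × ℕ)))
  | .a k => Set.range fun x => gadgetPath c1 c2 x k
  | .b i => Set.range fun x => (.b i, .a i.succ, (0, 0)) :: gadgetPath c1 c2 x i.succ

lemma mem_gadgetSuffixes_of_arcPath {u : GVertex n} {l : List (GVertex n × GVertex n × (ℕ × ℕ))}
    (hl : ArcPath (GEdge n c1 c2) u (.a (Fin.last n)) l) : l ∈ gadgetSuffixes c1 c2 u := by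
  generalize ht : GVertex.a (Fin.last n) = t at hl
  induction hl with
  | nil => subst ht; exact ⟨fun _ => true, gadgetPath_last _⟩
  | cons he _ ih =>
    rcases he with ⟨i, rfl, rfl, rfl⟩ | ⟨i, rfl, rfl, rfl⟩ | ⟨i, rfl, rfl, rfl⟩ <;>
      obtain ⟨x, rfl⟩ := ih ht
    · exact ⟨Function.update x i true, by simp [gadgetPath_update_castSucc, gadgetSegment]⟩
    · exact ⟨x, rfl⟩
    · exact ⟨Function.update x i false, by simp [gadgetPath_update_castSucc, gadgetSegment]⟩

lemma exists_eq_gadgetPath_of_arcPath {k : Fin (n + 1)} {l : List (GVertex n × GVertex n × (ℕ × ℕ))}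
    (hl : ArcPath (GEdge n c1 c2) (.a k) (.a (Fin.last n)) l) : ∃ x, gadgetPath c1 c2 x k = l :=
  mem_gadgetSuffixes_of_arcPath hl

lemma mem_gadgetSegment (x : Fin n → Bool) (i j : Fin n) :
    (.a i.castSucc, .b i, (c1 i, 0)) ∈ gadgetSegment c1 c2 x j ↔ j = i ∧ x j = true := by
  unfold gadgetSegment
  by_cases hj : j = i
  · subst hj; cases x j <;> simp
  · split <;> simp [Ne.symm hj, hj]

lemma usedArcs_gadgetPath_zero (x : Fin n → Bool) : usedArcs c1 (gadgetPath c1 c2 x 0) = x := by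
  funext i
  simp [usedArcs, gadgetPath, mem_gadgetSegment]

lemma pathCost_gadgetSegment (x : Fin n → Bool) (i : Fin n) :
    pathCost (gadgetSegment c1 c2 x i) = (if x i then c1 i else 0, if x i then 0 else c2 i) := by
  unfold gadgetSegment
  split <;> simp_all [pathCost]

lemma pathCost_gadgetPath_zero (x : Fin n → Bool) :
    pathCost (gadgetPath c1 c2 x 0) =
      (∑ i, if x i then c1 i else 0, ∑ i, if x i then 0 else c2 i) := by
  rw [pathCost_eq_sum, gadgetPath, Fin.val_zero, List.drop_zero, List.map_flatMap, List.flatMap,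
    List.sum_flatten, List.map_map]
  simp_rw [Function.comp_def, ← pathCost_eq_sum, pathCost_gadgetSegment, ← Fin.sum_univ_def]
  ext <;> simp [Prod.fst_sum, Prod.snd_sum]

end GadgetPaths

/-- The `s`-`t`-paths through the gadget graph are in bijection with the vectors
`x ∈ {0,1}ⁿ` (where `x_i = 1` iff the path uses the arc `(v_i¹, v_i²)`), and the path
corresponding to `x` has cost `((c¹)ᵀx, (c²)ᵀ(𝟏 − x))`. -/
theorem stmt_5 (n : ℕ) (c1 c2 : Fin n → ℕ) :
    ∃ e : {l : List (GVertex n × GVertex n × (ℕ × ℕ)) //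
            ArcPath (GEdge n c1 c2) (.a 0) (.a (Fin.last n)) l} ≃ (Fin n → Bool),
      ∀ p, (∀ i : Fin n, e p i = true ↔ ((.a i.castSucc, .b i, (c1 i, 0)) ∈ p.1)) ∧
        pathCost p.1 =
          (∑ i, if e p i then c1 i else 0, ∑ i, if e p i then 0 else c2 i) := by
  let e : {l // ArcPath (GEdge n c1 c2) (.a 0) (.a (Fin.last n)) l} ≃ (Fin n → Bool) :=
    { toFun := fun p => usedArcs c1 p.1
      invFun := fun x => ⟨gadgetPath c1 c2 x 0, arcPath_gadgetPath x 0⟩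
      left_inv := fun ⟨l, hl⟩ => by
        obtain ⟨x, rfl⟩ := exists_eq_gadgetPath_of_arcPath hl
        simp only [usedArcs_gadgetPath_zero]
      right_inv := usedArcs_gadgetPath_zero }
  refine ⟨e, fun ⟨l, hl⟩ => ⟨fun i => decide_eq_true_iff, ?_⟩⟩
  obtain ⟨x, rfl⟩ := exists_eq_gadgetPath_of_arcPath hl
  have hx : e ⟨_, hl⟩ = x := usedArcs_gadgetPath_zero x
  rw [hx, pathCost_gadgetPath_zero]
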